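/- arXiv:1802.09466 — 2 statements merged into one kernel-verified Lean document; each statement's English description precedes it below -/
import Mathlib

section
/- Let D : [0,∞) → [0,∞) be strictly increasing and right-continuous with D(0)=0, let E be its inverse E(t) = inf{s > 0 : D(s) > t}, fix τ > 0, and set T = D(τ−) (the left limit of D at τ). Suppose that for constants m > 0, γ ≥ 1, δ ∈ (0, τ) we have D(τ−) − D((τ−s)−) ≤ m·s^γ for all s ∈ [0, δ]. Then for every t ∈ [D(τ−δ), T), E(T) − E(t) ≥ ((T − t)/m)^{1/γ}. -/
/-!
Write `E = genInv D` for the generalized inverse of `D`. Since `D` is increasing, `E(T) = τ`,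
and every `t ∈ [D(τ-δ), T)` satisfies `E(t) ∈ [τ-δ, τ]` and `D(E(t)-) ≤ t`. The jump hypothesis
at `s = τ - E(t)` therefore gives `T - t ≤ T - D(E(t)-) ≤ m (E(T) - E(t))^γ`; solve for
`E(T) - E(t)`.
-/

open Set

noncomputable def genInv (D : ℝ → ℝ) (t : ℝ) : ℝ := sInf {s : ℝ | 0 < s ∧ t < D s}

section GenInv

variable {D : ℝ → ℝ} {t a : ℝ}

theorem genInv_le_of_lt {s : ℝ} (hs : 0 < s) (hts : t < D s) : genInv D t ≤ s :=
  csInf_le ⟨0, fun _ hu => hu.1.le⟩ ⟨hs, hts⟩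

theorem genInv_le (hD : StrictMonoOn D (Ici 0)) (ha : 0 ≤ a) (hta : t ≤ D a) : genInv D t ≤ a :=
  le_of_forall_pos_le_add fun ε hε =>
    genInv_le_of_lt (by linarith) (hta.trans_lt (hD ha (by simp only [mem_Ici]; linarith) (by linarith)))

theorem le_genInv (hD : MonotoneOn D (Ici 0)) (ha : 0 ≤ a) (hat : D a ≤ t)
    (hne : ∃ s, 0 < s ∧ t < D s) : a ≤ genInv D t :=
  le_csInf hne fun _ ⟨hs, hts⟩ =>
    le_of_not_gt fun hsa => (hts.trans_le ((hD hs.le ha hsa.le).trans hat)).false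

theorem sSup_image_Ico_genInv_le (h0 : D 0 ≤ t) (hpos : 0 < genInv D t) :
    sSup (D '' Ico 0 (genInv D t)) ≤ t := by
  refine csSup_le ⟨D 0, 0, ⟨le_rfl, hpos⟩, rfl⟩ ?_
  rintro _ ⟨u, ⟨hu0, huE⟩, rfl⟩
  rcases hu0.eq_or_lt with rfl | hu
  · exact h0
  · exact le_of_not_gt fun htu => (genInv_le_of_lt hu htu).not_gt huE

end GenInv

section LeftLimit

variable {D : ℝ → ℝ} {τ : ℝ}

theorem le_sSup_image_Ico (hD : MonotoneOn D (Ici 0)) (hτ : 0 < τ) {a : ℝ} (ha : a ∈ Ico 0 τ) :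
    D a ≤ sSup (D '' Ico 0 τ) :=
  le_csSup ⟨D τ, by rintro _ ⟨u, hu, rfl⟩; exact hD hu.1 hτ.le hu.2.le⟩ (mem_image_of_mem D ha)

theorem sSup_image_Ico_le (hD : MonotoneOn D (Ici 0)) (hτ : 0 < τ) :
    sSup (D '' Ico 0 τ) ≤ D τ :=
  csSup_le ⟨D 0, 0, ⟨le_rfl, hτ⟩, rfl⟩ (by rintro _ ⟨u, hu, rfl⟩; exact hD hu.1 hτ.le hu.2.le)

theorem genInv_sSup_image_Ico (hD : StrictMonoOn D (Ici 0)) (hτ : 0 < τ) :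
    genInv D (sSup (D '' Ico 0 τ)) = τ := by
  have hTτ := sSup_image_Ico_le hD.monotoneOn hτ
  refine le_antisymm (genInv_le hD hτ.le hTτ) (le_csInf ?_ ?_)
  · exact ⟨τ + 1, by linarith, hTτ.trans_lt (hD hτ.le (by simp only [mem_Ici]; linarith) (by linarith))⟩
  · rintro s ⟨hs, hTs⟩
    exact le_of_not_gt fun hsτ =>
      (hTs.trans_le (le_sSup_image_Ico hD.monotoneOn hτ ⟨hs.le, hsτ⟩)).false

end LeftLimit

theorem Real.rpow_one_div_le_of_le_mul_rpow {x m γ s : ℝ} (hx : 0 ≤ x) (hm : 0 < m) (hγ : 0 < γ)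
    (hs : 0 ≤ s) (h : x ≤ m * s ^ γ) : (x / m) ^ (1 / γ) ≤ s := by
  rw [one_div, Real.rpow_inv_le_iff_of_pos (div_nonneg hx hm.le) hs hγ, div_le_iff₀ hm, mul_comm]
  exact h

theorem inverse_increment_lower_bound_general
    (D : ℝ → ℝ)
    (hDmono : StrictMonoOn D (Set.Ici 0))
    (E : ℝ → ℝ) (hE : ∀ t : ℝ, E t = sInf {s : ℝ | 0 < s ∧ t < D s})
    (τ m γ δ T : ℝ) (hm : 0 < m) (hγ : 1 ≤ γ) (hδ0 : 0 < δ) (hδτ : δ < τ)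
    (hT : T = sSup (D '' Set.Ico 0 τ))
    (hjump : ∀ s ∈ Set.Icc (0 : ℝ) δ,
      sSup (D '' Set.Ico 0 τ) - sSup (D '' Set.Ico 0 (τ - s)) ≤ m * s ^ γ) :
    ∀ t : ℝ, D (τ - δ) ≤ t → t < T → ((T - t) / m) ^ (1 / γ) ≤ E T - E t := by
  intro t ht htT
  obtain rfl : E = genInv D := funext hE
  have hτδ : 0 < τ - δ := by linarith
  have hTτ : T ≤ D τ := hT ▸ sSup_image_Ico_le hDmono.monotoneOn (by linarith)
  have hET : genInv D T = τ := hT ▸ genInv_sSup_image_Ico hDmono (by linarith)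
  have hEt_le : genInv D t ≤ τ := genInv_le hDmono (by linarith) (htT.trans_le hTτ).le
  have le_hEt : τ - δ ≤ genInv D t :=
    le_genInv hDmono.monotoneOn hτδ.le ht ⟨τ, by linarith, htT.trans_le hTτ⟩
  have hleft : sSup (D '' Ico 0 (genInv D t)) ≤ t :=
    sSup_image_Ico_genInv_le ((hDmono.monotoneOn self_mem_Ici hτδ.le hτδ.le).trans ht) (by linarith)
  have hjump_t := hjump (τ - genInv D t) ⟨by linarith, by linarith⟩
  rw [sub_sub_cancel, ← hT] at hjump_t
  rw [hET]
  exact Real.rpow_one_div_le_of_le_mul_rpow (by linarith) hm (by linarith) (by linarith)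
    (by linarith)

/-- Let `D` be strictly increasing and right-continuous with `D(0) = 0`, let
`E(t) = inf{s > 0 : D(s) > t}` be its generalized inverse, `τ > 0`, and
`T = D(τ-) = sup D([0,τ))`.  If `D(τ-) - D((τ-s)-) ≤ m s^γ` for all `s ∈ [0,δ]`
(where `m > 0`, `γ ≥ 1`, `0 < δ < τ`), then for every `t ∈ [D(τ-δ), T)`,
`E(T) - E(t) ≥ ((T - t)/m)^{1/γ}`. -/
theorem inverse_increment_lower_bound
    (D : ℝ → ℝ) (hDnonneg : ∀ t : ℝ, 0 ≤ t → 0 ≤ D t) (hD0 : D 0 = 0)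
    (hDmono : StrictMonoOn D (Set.Ici 0))
    (hDrc : ∀ t : ℝ, 0 ≤ t → ContinuousWithinAt D (Set.Ici t) t)
    (E : ℝ → ℝ) (hE : ∀ t : ℝ, E t = sInf {s : ℝ | 0 < s ∧ t < D s})
    (τ m γ δ T : ℝ) (hτ : 0 < τ) (hm : 0 < m) (hγ : 1 ≤ γ) (hδ0 : 0 < δ) (hδτ : δ < τ)
    (hT : T = sSup (D '' Set.Ico 0 τ))
    (hjump : ∀ s ∈ Set.Icc (0 : ℝ) δ,
      sSup (D '' Set.Ico 0 τ) - sSup (D '' Set.Ico 0 (τ - s)) ≤ m * s ^ γ) :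
    ∀ t : ℝ, D (τ - δ) ≤ t → t < T → ((T - t) / m) ^ (1 / γ) ≤ E T - E t :=
  inverse_increment_lower_bound_general D hDmono E hE τ m γ δ T hm hγ hδ0 hδτ hT hjump
end

section
/- Under the hypotheses of the previous setup, if additionally X : [0,∞) → ℝ satisfies |X(τ) − X(s)| ≥ c(τ − s)^β for all s ∈ (τ − δ, τ), where c > 0 and 0 < β, and γ ≥ 1 is chosen with β/γ = 1/2 and m > 0 with c/√m ≥ 4, then the time-changed function λ(t) = X(E(t)) satisfies |λ(T) − λ(t)| ≥ 4·√(T − t) for all t ∈ [D(τ−δ), T). -/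
open Set

theorem le_on_Ico_of_le_on_Ioo {f g : ℝ → ℝ} {a b : ℝ} (hf : Continuous f) (hg : Continuous g)
    (h : ∀ s ∈ Ioo a b, f s ≤ g s) : ∀ s ∈ Ico a b, f s ≤ g s := fun _ hs =>
  le_on_closure h hf.continuousOn hg.continuousOn
    (interior_Ico (a := a) (b := b) ▸ Ico_subset_closure_interior a b hs)

theorem Real.rpow_one_div_rpow_eq_sqrt {x β γ : ℝ} (hx : 0 ≤ x) (hβγ : β / γ = 1 / 2) :
    (x ^ (1 / γ)) ^ β = √x := by
  rw [← Real.rpow_mul hx, one_div_mul_eq_div, hβγ, Real.sqrt_eq_rpow]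

theorem Real.mul_sqrt_le_mul_sqrt_div {a c m u : ℝ} (hm : 0 < m) (hc : a * √m ≤ c) :
    a * √u ≤ c * √(u / m) := by
  calc a * √u = a * √m * √(u / m) := by
        rw [mul_assoc, ← Real.sqrt_mul hm.le, mul_div_cancel₀ _ hm.ne']
    _ ≤ c * √(u / m) := mul_le_mul_of_nonneg_right hc (Real.sqrt_nonneg _)

theorem time_changed_fast_decrease_general
    (D E X : ℝ → ℝ) (τ m γ δ β c T : ℝ)
    (hm : 0 < m)
    (hβ : 0 < β) (hβγ : β / γ = 1 / 2) (hc : 4 * Real.sqrt m ≤ c)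
    (hXcont : Continuous X)
    (hX : ∀ s : ℝ, τ - δ < s → s < τ → c * (τ - s) ^ β ≤ |X τ - X s|)
    (hET : E T = τ)
    (hErange : ∀ t : ℝ, D (τ - δ) ≤ t → t < T → τ - δ ≤ E t ∧ E t ≤ τ)
    (hEbound : ∀ t : ℝ, D (τ - δ) ≤ t → t < T → ((T - t) / m) ^ (1 / γ) ≤ E T - E t) :
    ∀ t : ℝ, D (τ - δ) ≤ t → t < T → 4 * Real.sqrt (T - t) ≤ |X (E T) - X (E t)| := by
  have hX' : ∀ s ∈ Ico (τ - δ) τ, c * (τ - s) ^ β ≤ |X τ - X s| :=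
    le_on_Ico_of_le_on_Ioo (by fun_prop (disch := exact hβ.le)) (by fun_prop)
      fun s hs => hX s hs.1 hs.2
  intro t htD htT
  have hu : 0 ≤ (T - t) / m := div_nonneg (sub_nonneg.2 htT.le) hm.le
  have hgap := hEbound t htD htT
  rw [hET] at hgap ⊢
  have hEt : E t < τ := by
    linarith [Real.rpow_pos_of_pos (div_pos (sub_pos.2 htT) hm) (1 / γ)]
  calc 4 * √(T - t) ≤ c * √((T - t) / m) := Real.mul_sqrt_le_mul_sqrt_div hm hc
    _ = c * (((T - t) / m) ^ (1 / γ)) ^ β := by rw [Real.rpow_one_div_rpow_eq_sqrt hu hβγ]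
    _ ≤ c * (τ - E t) ^ β := by
        have hc0 : 0 ≤ c := le_trans (by positivity) hc
        gcongr
    _ ≤ |X τ - X (E t)| := hX' _ ⟨(hErange t htD htT).1, hEt⟩

/-- Under the setup of the previous lemma (generalized inverse `E` of a strictly
increasing right-continuous `D`, `T = D(τ-)`, with `E(T) = τ`,
`E(T) - E(t) ≥ ((T-t)/m)^{1/γ}` and `E(t) ∈ [τ-δ, τ]` for `t ∈ [D(τ-δ), T)`):
if `X` is continuous with `|X(τ) - X(s)| ≥ c(τ-s)^β` for `s ∈ (τ-δ, τ)`, where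
`β/γ = 1/2` and `c ≥ 4√m`, then `λ(t) = X(E(t))` satisfies
`|λ(T) - λ(t)| ≥ 4√(T-t)` for all `t ∈ [D(τ-δ), T)`. -/
theorem time_changed_fast_decrease
    (D E X : ℝ → ℝ) (τ m γ δ β c T : ℝ)
    (hτ : 0 < τ) (hm : 0 < m) (hγ : 1 ≤ γ) (hδ0 : 0 < δ) (hδτ : δ < τ)
    (hβ : 0 < β) (hβγ : β / γ = 1 / 2) (hc : 4 * Real.sqrt m ≤ c)
    (hXcont : Continuous X)
    (hX : ∀ s : ℝ, τ - δ < s → s < τ → c * (τ - s) ^ β ≤ |X τ - X s|)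
    (hET : E T = τ)
    (hErange : ∀ t : ℝ, D (τ - δ) ≤ t → t < T → τ - δ ≤ E t ∧ E t ≤ τ)
    (hEbound : ∀ t : ℝ, D (τ - δ) ≤ t → t < T → ((T - t) / m) ^ (1 / γ) ≤ E T - E t) :
    ∀ t : ℝ, D (τ - δ) ≤ t → t < T → 4 * Real.sqrt (T - t) ≤ |X (E T) - X (E t)| :=
  time_changed_fast_decrease_general D E X τ m γ δ β c T hm hβ hβγ hc hXcont hX hET hErange hEbound
end
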